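/- Let g : ℝⁿ → ℝ be differentiable with L-Lipschitz gradient, let C ⊆ ℝⁿ be nonempty and closed, let 0 < μ, and let x⁺ be any minimizer over C of the function y ↦ ‖y − (x − μ ∇g(x))‖² where x ∈ C. Then g(x⁺) ≤ g(x) − (1/(2μ) − L/2)‖x⁺ − x‖². -/

import Mathlib

open scoped InnerProductSpace

/-! The descent lemma gives `g x⁺ ≤ g x + ⟪∇g x, x⁺ - x⟫ + L/2 ‖x⁺ - x‖²`, and comparing the
projection objective at `x⁺` with its value at the feasible point `x` gives
`⟪∇g x, x⁺ - x⟫ ≤ -‖x⁺ - x‖² / (2μ)`. -/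

section Gradient

variable {E : Type*} [NormedAddCommGroup E] [InnerProductSpace ℝ E] [CompleteSpace E]
  {g : E → ℝ}

theorem hasDerivAt_comp_add_smul {x v : E} {t : ℝ} (hg : DifferentiableAt ℝ g (x + t • v)) :
    HasDerivAt (fun s : ℝ => g (x + s • v)) ⟪gradient g (x + t • v), v⟫_ℝ t := by
  have hline : HasDerivAt (fun s : ℝ => x + s • v) v t := by
    simpa using ((hasDerivAt_id t).smul_const v).const_add x
  exact (hg.hasGradientAt.hasFDerivAt.comp_hasDerivAt t hline).congr_deriv
    (InnerProductSpace.toDual_apply_apply ..)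

theorem le_add_inner_gradient_add_of_norm_gradient_sub_le (hg : Differentiable ℝ g) {L : ℝ}
    (hL : ∀ x y, ‖gradient g x - gradient g y‖ ≤ L * ‖x - y‖) (x y : E) :
    g y ≤ g x + ⟪gradient g x, y - x⟫_ℝ + L / 2 * ‖y - x‖ ^ 2 := by
  set v := y - x
  -- `φ 0 = 0`, and `φ` is antitone on `[0, 1]` because `φ' t = ⟪∇g (x + t v) - ∇g x, v⟫ - L t ‖v‖²`
  -- is nonpositive there by Cauchy–Schwarz and the Lipschitz bound.
  set φ : ℝ → ℝ := fun t => g (x + t • v) - t * ⟪gradient g x, v⟫_ℝ - L / 2 * t ^ 2 * ‖v‖ ^ 2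
  have hφ' : ∀ t, HasDerivAt φ
      (⟪gradient g (x + t • v) - gradient g x, v⟫_ℝ - L * t * ‖v‖ ^ 2) t := by
    intro t
    refine (((hasDerivAt_comp_add_smul (hg _)).sub
      ((hasDerivAt_id t).mul_const ⟪gradient g x, v⟫_ℝ)).sub
      (((hasDerivAt_pow 2 t).const_mul (L / 2)).mul_const (‖v‖ ^ 2))).congr_deriv ?_
    rw [inner_sub_left]
    ring
  have hanti : AntitoneOn φ (Set.Icc 0 1) := by
    refine antitoneOn_of_deriv_nonpos (convex_Icc 0 1)
      (fun t _ => (hφ' t).continuousAt.continuousWithinAt)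
      (fun t _ => (hφ' t).differentiableAt.differentiableWithinAt) fun t ht => ?_
    rw [interior_Icc] at ht
    have hdist : ‖x + t • v - x‖ = t * ‖v‖ := by
      simp [norm_smul, abs_of_pos ht.1]
    rw [(hφ' t).deriv, sub_nonpos]
    calc ⟪gradient g (x + t • v) - gradient g x, v⟫_ℝ
        ≤ ‖gradient g (x + t • v) - gradient g x‖ * ‖v‖ := real_inner_le_norm _ _
      _ ≤ L * (t * ‖v‖) * ‖v‖ := by
          rw [← hdist]; exact mul_le_mul_of_nonneg_right (hL _ _) (norm_nonneg v)
      _ = L * t * ‖v‖ ^ 2 := by ring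
  have h01 := hanti (by norm_num : (0 : ℝ) ∈ Set.Icc 0 1) (by norm_num : (1 : ℝ) ∈ Set.Icc 0 1)
    zero_le_one
  simp only [φ, zero_smul, add_zero, one_smul, v, add_sub_cancel] at h01
  linarith

end Gradient

theorem inner_le_of_norm_sub_sq_le {E : Type*} [NormedAddCommGroup E] [InnerProductSpace ℝ E]
    {μ : ℝ} (hμ : 0 < μ) {x y d : E} (h : ‖y - (x - μ • d)‖ ^ 2 ≤ ‖x - (x - μ • d)‖ ^ 2) :
    ⟪d, y - x⟫_ℝ ≤ -(1 / (2 * μ)) * ‖y - x‖ ^ 2 := by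
  have hexpand : ‖y - (x - μ • d)‖ ^ 2 = ‖y - x‖ ^ 2 + 2 * μ * ⟪d, y - x⟫_ℝ + ‖μ • d‖ ^ 2 := by
    rw [show y - (x - μ • d) = (y - x) + μ • d by abel, norm_add_sq_real, real_inner_smul_right,
      real_inner_comm]
    ring
  rw [hexpand, sub_sub_cancel] at h
  rw [neg_mul, one_div_mul_eq_div, le_neg, div_le_iff₀ (by positivity)]
  linarith

theorem projected_gradient_descent_step_general {n : ℕ} (g : EuclideanSpace ℝ (Fin n) → ℝ) (L : ℝ)
    (hg : Differentiable ℝ g)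
    (hL : ∀ x y, ‖gradient g x - gradient g y‖ ≤ L * ‖x - y‖)
    (C : Set (EuclideanSpace ℝ (Fin n)))
    (μ : ℝ) (hμ : 0 < μ) (x xp : EuclideanSpace ℝ (Fin n)) (hx : x ∈ C)
    (hmin : ∀ y ∈ C, ‖xp - (x - μ • gradient g x)‖ ^ 2 ≤ ‖y - (x - μ • gradient g x)‖ ^ 2) :
    g xp ≤ g x - (1 / (2 * μ) - L / 2) * ‖xp - x‖ ^ 2 := by
  have hdescent := le_add_inner_gradient_add_of_norm_gradient_sub_le hg hL x xp
  have hstep := inner_le_of_norm_sub_sq_le hμ (hmin x hx)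
  linarith

theorem projected_gradient_descent_step {n : ℕ} (g : EuclideanSpace ℝ (Fin n) → ℝ) (L : ℝ)
    (hg : Differentiable ℝ g)
    (hL : ∀ x y, ‖gradient g x - gradient g y‖ ≤ L * ‖x - y‖)
    (C : Set (EuclideanSpace ℝ (Fin n))) (hCne : C.Nonempty) (hC : IsClosed C)
    (μ : ℝ) (hμ : 0 < μ) (x xp : EuclideanSpace ℝ (Fin n)) (hx : x ∈ C) (hxp : xp ∈ C)
    (hmin : ∀ y ∈ C, ‖xp - (x - μ • gradient g x)‖ ^ 2 ≤ ‖y - (x - μ • gradient g x)‖ ^ 2) :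
    g xp ≤ g x - (1 / (2 * μ) - L / 2) * ‖xp - x‖ ^ 2 :=
  projected_gradient_descent_step_general g L hg hL C μ hμ x xp hx hmin
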